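/- arXiv:1404.3763 — 2 statements merged into one kernel-verified Lean document; each statement's English description precedes it below -/
import Mathlib

section
/- Let A be a compact metric space, θ ∈ C(A) a continuous function, and define Ψ(θ) = argmax_{a∈A} θ(a) (the nonempty compact set of maximizers). Define φ : C(A) → ℝ by φ(f) = sup_{a∈A} f(a). Then for any sequences tₙ ↓ 0 (tₙ > 0) and hₙ ∈ C(A) with ‖hₙ − h‖_∞ → 0 for some h ∈ C(A), one has (φ(θ + tₙ hₙ) − φ(θ))/tₙ → sup_{a ∈ Ψ(θ)} h(a). -/
open Filter Topology

/-- Directional differentiability of the supremum functional on C(A) at a continuous θ: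
the directional derivative is the supremum of the direction over the argmax set of θ. -/
theorem statement4 {A : Type*} [MetricSpace A] [CompactSpace A] [Nonempty A]
    (θ : C(A, ℝ)) (t : ℕ → ℝ) (ht : ∀ n, 0 < t n)
    (ht0 : Tendsto t atTop (𝓝 0))
    (hs : ℕ → C(A, ℝ)) (h : C(A, ℝ))
    (hconv : Tendsto hs atTop (𝓝 h)) :
    Tendsto (fun n => ((⨆ a, (θ a + t n * hs n a)) - ⨆ a, θ a) / t n) atTop
      (𝓝 (sSup (⇑h '' {a | ∀ b, θ b ≤ θ a}))) := by
  set M := ⨆ a, θ a with hMdef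
  set Ψ : Set A := {a | ∀ b, θ b ≤ θ a} with hΨdef
  set L := sSup (⇑h '' Ψ) with hLdef
  -- maximizer of θ
  obtain ⟨a₀, -, ha₀⟩ := isCompact_univ.exists_isMaxOn Set.univ_nonempty
    θ.continuous.continuousOn
  have ha₀' : ∀ b, θ b ≤ θ a₀ := fun b => ha₀ (Set.mem_univ b)
  have hbddθ : BddAbove (Set.range θ) := ⟨θ a₀, Set.forall_mem_range.2 ha₀'⟩
  have hMa : M = θ a₀ := le_antisymm (ciSup_le ha₀') (le_ciSup hbddθ a₀)
  have hθleM : ∀ a, θ a ≤ M := fun a => le_ciSup hbddθ a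
  -- Ψ compact nonempty
  have hΨne : a₀ ∈ Ψ := ha₀'
  have hΨclosed : IsClosed Ψ := by
    have : Ψ = ⋂ b, {a | θ b ≤ θ a} := by ext a; simp [hΨdef]
    rw [this]
    exact isClosed_iInter fun b => isClosed_le continuous_const θ.continuous
  have hΨcomp : IsCompact Ψ := hΨclosed.isCompact
  -- maximizer of h on Ψ
  obtain ⟨a₁, ha₁Ψ, ha₁max⟩ := hΨcomp.exists_isMaxOn ⟨a₀, hΨne⟩ h.continuous.continuousOn
  have hbddhΨ : BddAbove (⇑h '' Ψ) := ⟨h a₁, by rintro x ⟨a, ha, rfl⟩; exact ha₁max ha⟩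
  have hLa : L = h a₁ := le_antisymm (csSup_le ⟨h a₁, ⟨a₁, ha₁Ψ, rfl⟩⟩
      (by rintro x ⟨a, ha, rfl⟩; exact ha₁max ha))
    (le_csSup hbddhΨ ⟨a₁, ha₁Ψ, rfl⟩)
  have hθa₁ : θ a₁ = M := le_antisymm (hθleM a₁) (ciSup_le ha₁Ψ)
  -- distance
  set d : ℕ → ℝ := fun n => dist (hs n) h with hddef
  have hd0 : Tendsto d atTop (𝓝 0) := tendsto_iff_dist_tendsto_zero.mp hconv
  have hdle : ∀ n a, |hs n a - h a| ≤ d n := fun n a => by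
    have := ContinuousMap.dist_apply_le_dist (f := hs n) (g := h) a
    rwa [Real.dist_eq] at this
  have hdnn : ∀ n, 0 ≤ d n := fun n => dist_nonneg
  rw [Metric.tendsto_nhds]
  intro ε hε
  -- δ separation for the set where h a ≥ L + ε/2
  set K : Set A := {a | L + ε / 2 ≤ h a} with hKdef
  have hKclosed : IsClosed K := isClosed_le continuous_const h.continuous
  obtain ⟨δ, hδpos, hδ⟩ : ∃ δ > 0, ∀ a ∈ K, θ a ≤ M - δ := by
    by_cases hK : K.Nonempty
    · obtain ⟨c, hcK, hcmax⟩ := hKclosed.isCompact.exists_isMaxOn hK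
        θ.continuous.continuousOn
      have hcΨ : c ∉ Ψ := by
        intro hc
        have : h c ≤ L := le_csSup hbddhΨ ⟨c, hc, rfl⟩
        have := hcK
        simp only [hKdef, Set.mem_setOf_eq] at this
        linarith
      have hclt : θ c < M := by
        rcases lt_or_eq_of_le (hθleM c) with h' | h'
        · exact h'
        · exact absurd (fun b => h' ▸ hθleM b) hcΨ
      refine ⟨M - θ c, by linarith, fun a ha => ?_⟩
      have h9 : θ a ≤ θ c := hcmax ha
      linarith
    · exact ⟨1, one_pos, fun a ha => absurd ⟨a, ha⟩ hK⟩
  -- eventual smallness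
  have E1 : ∀ᶠ n in atTop, t n * (‖h‖ - (L + ε / 2)) < δ := by
    have h1 : Tendsto (fun n => t n * (‖h‖ - (L + ε / 2))) atTop (𝓝 0) := by
      simpa using ht0.mul_const (‖h‖ - (L + ε / 2))
    exact h1.eventually_lt_const hδpos
  have E2 : ∀ᶠ n in atTop, d n < ε / 2 := hd0.eventually_lt_const (by linarith)
  filter_upwards [E1, E2] with n h1 h2
  have htn := ht n
  -- bounds on the sup
  set f : A → ℝ := fun a => θ a + t n * hs n a with hfdef
  have hfcont : Continuous f := θ.continuous.add (continuous_const.mul (hs n).continuous)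
  obtain ⟨m, -, hm⟩ := isCompact_univ.exists_isMaxOn Set.univ_nonempty hfcont.continuousOn
  have hbddf : BddAbove (Set.range f) :=
    ⟨f m, Set.forall_mem_range.2 fun a => hm (Set.mem_univ a)⟩
  set S := ⨆ a, f a with hSdef
  -- lower bound
  have hlow : f a₁ ≤ S := le_ciSup hbddf a₁
  have hlow' : L - d n ≤ (S - M) / t n := by
    rw [le_div_iff₀ htn]
    have h3 := hdle n a₁
    have h4 : t n * (h a₁ - d n) ≤ t n * hs n a₁ := by
      apply mul_le_mul_of_nonneg_left _ htn.le
      cases' abs_le.mp h3 with h5 h6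
      linarith
    have : θ a₁ + t n * hs n a₁ ≤ S := hlow
    rw [hθa₁] at this
    nlinarith [hdnn n]
  -- upper bound
  have hup : S ≤ M + t n * (L + ε / 2) + t n * d n := by
    apply ciSup_le
    intro a
    have h3 := hdle n a
    have h4 : t n * hs n a ≤ t n * (h a + d n) := by
      apply mul_le_mul_of_nonneg_left _ htn.le
      cases' abs_le.mp h3 with h5 h6
      linarith
    by_cases haK : a ∈ K
    · have h5 := hδ a haK
      have h6 : h a ≤ ‖h‖ := le_trans (le_abs_self _)
        (by simpa [Real.norm_eq_abs] using h.norm_coe_le_norm a)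
      have h7 : t n * h a ≤ t n * ‖h‖ := mul_le_mul_of_nonneg_left h6 htn.le
      have h8 : t n * ‖h‖ - t n * (L + ε / 2) < δ := by nlinarith
      nlinarith
    · have h5 : h a < L + ε / 2 := by
        simp only [hKdef, Set.mem_setOf_eq, not_le] at haK; exact haK
      have h6 : t n * h a ≤ t n * (L + ε / 2) := mul_le_mul_of_nonneg_left h5.le htn.le
      nlinarith [hθleM a]
  have hup' : (S - M) / t n ≤ L + ε / 2 + d n := by
    rw [div_le_iff₀ htn]
    nlinarith
  rw [Real.dist_eq, abs_lt]
  constructor <;> [skip; skip] <;> nlinarith [hlow', hup', hdnn n]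
end

section
/- Let w : ℝ → [0,∞) be integrable and define φ : ℓ∞(ℝ) × ℓ∞(ℝ) → ℝ by φ(θ) = ∫ max{θ⁽¹⁾(u) − θ⁽²⁾(u), 0} w(u) du. Then φ is Hadamard directionally differentiable at every θ = (θ⁽¹⁾, θ⁽²⁾), with derivative φ'_θ(h) = ∫_{B₊(θ)} (h⁽¹⁾(u) − h⁽²⁾(u)) w(u) du + ∫_{B₀(θ)} max{h⁽¹⁾(u) − h⁽²⁾(u), 0} w(u) du, where B₊(θ) = {u : θ⁽¹⁾(u) > θ⁽²⁾(u)} and B₀(θ) = {u : θ⁽¹⁾(u) = θ⁽²⁾(u)}. -/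
/-!
The map `x ↦ max x 0` is 1-Lipschitz and has the one-sided directional derivative
`posPartDirDeriv d k` at every point `d`. Hence the difference quotients of
`θ ↦ ∫ max (θ⁽¹⁾ - θ⁽²⁾) 0 * w` are integrals of integrands converging pointwise, dominated by
`K * |w|` as soon as the uniformly convergent directions are bounded by `K`, and dominated
convergence gives the derivative.
-/

open Filter Topology MeasureTheory

noncomputable def posPartDirDeriv (d k : ℝ) : ℝ :=
  if 0 < d then k else if d = 0 then max k 0 else 0

lemma abs_max_zero_le (a : ℝ) : |max a 0| ≤ |a| := by
  simpa using abs_max_sub_max_le_abs a 0 0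

lemma abs_max_zero_add_sub_le (d s : ℝ) : |max (d + s) 0 - max d 0| ≤ |s| := by
  simpa using abs_max_sub_max_le_abs (d + s) d 0

lemma abs_max_zero_diffQuot_le (d s k : ℝ) : |(max (d + s * k) 0 - max d 0) / s| ≤ |k| := by
  rcases eq_or_ne s 0 with rfl | hs
  · simp
  rw [abs_div, div_le_iff₀ (abs_pos.2 hs), ← abs_mul, mul_comm k s]
  exact abs_max_zero_add_sub_le d (s * k)

theorem tendsto_max_zero_diffQuot {t k : ℕ → ℝ} {d k₀ : ℝ} (ht : Tendsto t atTop (𝓝[>] 0))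
    (hk : Tendsto k atTop (𝓝 k₀)) :
    Tendsto (fun n => (max (d + t n * k n) 0 - max d 0) / t n) atTop
      (𝓝 (posPartDirDeriv d k₀)) := by
  obtain ⟨ht0, htpos⟩ := tendsto_nhdsWithin_iff.1 ht
  have hsmall : Tendsto (fun n => t n * k n) atTop (𝓝 0) := by simpa using ht0.mul hk
  rcases lt_trichotomy 0 d with hd | rfl | hd
  · rw [posPartDirDeriv, if_pos hd]
    refine hk.congr' ?_
    filter_upwards [htpos, hsmall.eventually (eventually_gt_nhds (neg_lt_zero.2 hd))]
      with n htn hn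
    rw [max_eq_left (by linarith), max_eq_left hd.le, add_sub_cancel_left,
      mul_div_cancel_left₀ _ (ne_of_gt htn)]
  · simp only [posPartDirDeriv, lt_irrefl, if_false, if_true]
    refine (hk.max tendsto_const_nhds).congr' ?_
    filter_upwards [htpos] with n htn
    rw [zero_add, max_self, sub_zero, ← max_div_div_right (le_of_lt htn), zero_div,
      mul_div_cancel_left₀ _ (ne_of_gt htn)]
  · rw [posPartDirDeriv, if_neg hd.not_gt, if_neg hd.ne]
    refine tendsto_const_nhds.congr' ?_
    filter_upwards [hsmall.eventually (eventually_lt_nhds (neg_pos.2 hd))] with n hn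
    rw [max_eq_right (by linarith), max_eq_right hd.le, sub_self, zero_div]

theorem TendstoUniformly.eventually_forall_abs_le {ι β : Type*} {l : Filter ι}
    {F : ι → β → ℝ} {f : β → ℝ} {M : ℝ} (hF : TendstoUniformly F f l) (hf : ∀ u, |f u| ≤ M) :
    ∀ᶠ n in l, ∀ u, |F n u| ≤ M + 1 := by
  filter_upwards [Metric.tendstoUniformly_iff.1 hF 1 one_pos] with n hn u
  have hdist : |f u - F n u| < 1 := hn u
  linarith [abs_sub_abs_le_abs_sub (F n u) (f u), abs_sub_comm (F n u) (f u), hf u]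

section Integral

variable {α : Type*} [MeasurableSpace α] {μ : Measure α}

theorem tendsto_integral_max_zero_diffQuot {w d k₀ : α → ℝ} {k : ℕ → α → ℝ} {t : ℕ → ℝ} {K : ℝ}
    (hw : Integrable w μ) (hd : AEStronglyMeasurable d μ)
    (hk : ∀ n, AEStronglyMeasurable (k n) μ) (hkK : ∀ᶠ n in atTop, ∀ᵐ u ∂μ, |k n u| ≤ K)
    (hk₀ : ∀ᵐ u ∂μ, Tendsto (fun n => k n u) atTop (𝓝 (k₀ u)))
    (ht : Tendsto t atTop (𝓝[>] 0)) (hdw : Integrable (fun u => max (d u) 0 * w u) μ) :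
    Tendsto (fun n =>
        ((∫ u, max (d u + t n * k n u) 0 * w u ∂μ) - ∫ u, max (d u) 0 * w u ∂μ) / t n)
      atTop (𝓝 (∫ u, posPartDirDeriv (d u) (k₀ u) * w u ∂μ)) := by
  have hw_meas := hw.aestronglyMeasurable
  have hdom : ∀ᶠ n in atTop, ∀ᵐ u ∂μ,
      ‖(max (d u + t n * k n u) 0 - max (d u) 0) / t n * w u‖ ≤ K * ‖w u‖ := by
    filter_upwards [hkK] with n hn
    filter_upwards [hn] with u hu
    rw [norm_mul, Real.norm_eq_abs]
    exact mul_le_mul_of_nonneg_right ((abs_max_zero_diffQuot_le _ _ _).trans hu) (norm_nonneg _)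
  refine (tendsto_integral_filter_of_dominated_convergence _ (.of_forall fun n => by fun_prop)
    hdom (hw.norm.const_mul K) (hk₀.mono fun u hu =>
      (tendsto_max_zero_diffQuot ht hu).mul_const (w u))).congr' ?_
  filter_upwards [hkK] with n hn
  have hdiff : Integrable (fun u => (max (d u + t n * k n u) 0 - max (d u) 0) * w u) μ := by
    refine (hw.norm.const_mul (|t n| * K)).mono' (by fun_prop) ?_
    filter_upwards [hn] with u hu
    rw [norm_mul, Real.norm_eq_abs]
    refine mul_le_mul_of_nonneg_right ?_ (norm_nonneg _)
    calc _ ≤ |t n * k n u| := abs_max_zero_add_sub_le _ _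
      _ = |t n| * |k n u| := abs_mul _ _
      _ ≤ |t n| * K := by gcongr
  have hA : Integrable (fun u => max (d u + t n * k n u) 0 * w u) μ :=
    (hdiff.add hdw).congr (ae_of_all _ fun u => by simp [sub_mul])
  rw [← integral_sub hA hdw, ← integral_div]
  congr 1 with u
  ring

theorem integral_posPartDirDeriv_mul {w d k : α → ℝ} (hd : Measurable d)
    (hkw : Integrable (fun u => k u * w u) μ)
    (hk'w : Integrable (fun u => max (k u) 0 * w u) μ) :
    ∫ u, posPartDirDeriv (d u) (k u) * w u ∂μ =
      (∫ u in {u | 0 < d u}, k u * w u ∂μ) + ∫ u in {u | d u = 0}, max (k u) 0 * w u ∂μ := by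
  have hpos : MeasurableSet {u | 0 < d u} := measurableSet_lt measurable_const hd
  have hzero : MeasurableSet {u | d u = 0} := measurableSet_eq_fun hd measurable_const
  rw [← integral_indicator hpos, ← integral_indicator hzero,
    ← integral_add (hkw.indicator hpos) (hk'w.indicator hzero)]
  congr 1 with u
  rcases lt_trichotomy 0 (d u) with hd | hd | hd
  · simp [posPartDirDeriv, hd, hd.ne']
  · simp [posPartDirDeriv, ← hd]
  · simp [posPartDirDeriv, hd.not_gt, hd.ne]

end Integral

theorem statement12_general (w : ℝ → ℝ) (hw : Integrable w)
    (θ1 θ2 h1 h2 : ℝ → ℝ)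
    (hθ1 : Measurable θ1) (hθ2 : Measurable θ2)
    (hh1 : Measurable h1) (hh2 : Measurable h2)
    (hθb : ∃ M, ∀ u, |θ1 u| ≤ M ∧ |θ2 u| ≤ M)
    (hhb : ∃ M, ∀ u, |h1 u| ≤ M ∧ |h2 u| ≤ M)
    (t : ℕ → ℝ) (ht : ∀ n, 0 < t n) (ht0 : Tendsto t atTop (𝓝 0))
    (H1 H2 : ℕ → ℝ → ℝ)
    (hH1 : ∀ n, Measurable (H1 n)) (hH2 : ∀ n, Measurable (H2 n))
    (hu1 : TendstoUniformly H1 h1 atTop) (hu2 : TendstoUniformly H2 h2 atTop) :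
    Tendsto (fun n =>
        ((∫ u, max (θ1 u + t n * H1 n u - (θ2 u + t n * H2 n u)) 0 * w u) -
          ∫ u, max (θ1 u - θ2 u) 0 * w u) / t n) atTop
      (𝓝 ((∫ u in {u | θ2 u < θ1 u}, (h1 u - h2 u) * w u) +
          ∫ u in {u | θ1 u = θ2 u}, max (h1 u - h2 u) 0 * w u)) := by
  obtain ⟨Mθ, hMθ⟩ := hθb
  obtain ⟨Mh, hMh⟩ := hhb
  have hsub : ∀ {f g : ℝ → ℝ} {M : ℝ}, (∀ u, |f u| ≤ M ∧ |g u| ≤ M) → ∀ u, |f u - g u| ≤ 2 * M :=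
    fun hM u => (abs_sub _ _).trans (by linarith [(hM u).1, (hM u).2])
  have hθ := hsub hMθ
  have hh := hsub hMh
  have hRHS := integral_posPartDirDeriv_mul (μ := volume) (d := fun u => θ1 u - θ2 u)
    (hθ1.sub hθ2) (hw.bdd_mul (by fun_prop) (ae_of_all _ hh))
    (hw.bdd_mul (by fun_prop) (ae_of_all _ fun u => (abs_max_zero_le _).trans (hh u)))
  simp only [sub_pos, sub_eq_zero] at hRHS
  rw [← hRHS]
  have hA : ∀ n u, θ1 u + t n * H1 n u - (θ2 u + t n * H2 n u)
      = θ1 u - θ2 u + t n * (H1 n u - H2 n u) := fun n u => by ring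
  simp only [hA]
  exact tendsto_integral_max_zero_diffQuot hw (by fun_prop) (fun n => by fun_prop)
    (((hu1.fun_sub hu2).eventually_forall_abs_le hh).mono fun n hn => ae_of_all _ hn)
    (ae_of_all _ fun u => (hu1.tendsto_at u).sub (hu2.tendsto_at u))
    (tendsto_nhdsWithin_iff.2 ⟨ht0, .of_forall ht⟩)
    (hw.bdd_mul (by fun_prop) (ae_of_all _ fun u => (abs_max_zero_le _).trans (hθ u)))

/-- Hadamard directional differentiability of the functional
θ ↦ ∫ max{θ⁽¹⁾ − θ⁽²⁾, 0} w at any θ = (θ⁽¹⁾, θ⁽²⁾), along any sequence tₙ ↓ 0 and any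
uniformly convergent sequence of (bounded measurable) directions. -/
theorem statement12 (w : ℝ → ℝ) (hw0 : ∀ u, 0 ≤ w u) (hw : Integrable w)
    (θ1 θ2 h1 h2 : ℝ → ℝ)
    (hθ1 : Measurable θ1) (hθ2 : Measurable θ2)
    (hh1 : Measurable h1) (hh2 : Measurable h2)
    (hθb : ∃ M, ∀ u, |θ1 u| ≤ M ∧ |θ2 u| ≤ M)
    (hhb : ∃ M, ∀ u, |h1 u| ≤ M ∧ |h2 u| ≤ M)
    (t : ℕ → ℝ) (ht : ∀ n, 0 < t n) (ht0 : Tendsto t atTop (𝓝 0))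
    (H1 H2 : ℕ → ℝ → ℝ)
    (hH1 : ∀ n, Measurable (H1 n)) (hH2 : ∀ n, Measurable (H2 n))
    (hHb : ∀ n, ∃ M, ∀ u, |H1 n u| ≤ M ∧ |H2 n u| ≤ M)
    (hu1 : TendstoUniformly H1 h1 atTop) (hu2 : TendstoUniformly H2 h2 atTop) :
    Tendsto (fun n =>
        ((∫ u, max (θ1 u + t n * H1 n u - (θ2 u + t n * H2 n u)) 0 * w u) -
          ∫ u, max (θ1 u - θ2 u) 0 * w u) / t n) atTop
      (𝓝 ((∫ u in {u | θ2 u < θ1 u}, (h1 u - h2 u) * w u) +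
          ∫ u in {u | θ1 u = θ2 u}, max (h1 u - h2 u) 0 * w u)) :=
  statement12_general w hw θ1 θ2 h1 h2 hθ1 hθ2 hh1 hh2 hθb hhb t ht ht0 H1 H2 hH1 hH2 hu1 hu2
end
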